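/- Expansion identity: for every nonnegative integer n, (sum_{j=0}^n s^j (n choose j)_{q^2}) / (-q;q)_n = sum_{j=0}^n (-1)^j (n choose j)_q prod_{i=0}^{j-1}(q^{2i+1} - s) / (-q;q)_j, as an identity in the field of rational functions in q with s an indeterminate. Equivalently, sum_{j=0}^n s^j (n choose j)_{q^2} = sum_{j=0}^n (-1)^j (n choose j)_q prod_{i=0}^{j-1}(q^{2i+1}-s) * ((-q;q)_n / (-q;q)_j). -/

import Mathlib

/-!
Both sides satisfy `F_{n+1}(s) = s F_n(s) + F_n(s q²)` and `F_0 = 1`. On the left this is the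
Pascal rule for `(n choose j)_{q²}`. On the right, write `T_{n,j}(s)` for the `j`-th summand. The
substitution `s ↦ s q²` only rescales the odd product:
`∏_{i<j+1} (q^{2i+1} - s q²) = q^{2j+1} (1 - s q) ∏_{i<j} (q^{2i+1} - s)`. With this and
`(1 - q^{j+1}) (n choose j+1)_q = (1 - q^{n-j}) (n choose j)_q` one checks that
`s T_{n,j}(s) + T_{n,j+1}(s q²) - T_{n+1,j+1}(s)` telescopes as `D_j - D_{j+1}`, where
`D_j = q^{n+1+j} T_{n,j}(s)`.
-/

open Finset

/-- Gaussian (q-)binomial coefficient, defined over any commutative ring by the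
Pascal-type recurrence `[n+1, k+1] = [n, k] + q^(k+1) * [n, k+1]`. -/
def qbinom {R : Type*} [CommRing R] (q : R) : ℕ → ℕ → R
  | _, 0 => 1
  | 0, _ + 1 => 0
  | n + 1, k + 1 => qbinom q n k + q ^ (k + 1) * qbinom q n (k + 1)

section

variable {R : Type*} [CommRing R]

theorem qbinom_zero_right (q : R) (n : ℕ) : qbinom q n 0 = 1 := by
  cases n <;> rfl

theorem qbinom_succ_succ (q : R) (n k : ℕ) :
    qbinom q (n + 1) (k + 1) = qbinom q n k + q ^ (k + 1) * qbinom q n (k + 1) :=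
  rfl

theorem qbinom_eq_zero_of_lt (q : R) : ∀ {n k : ℕ}, n < k → qbinom q n k = 0
  | 0, _ + 1, _ => rfl
  | n + 1, k + 1, h => by
    rw [qbinom_succ_succ, qbinom_eq_zero_of_lt q (by omega : n < k),
      qbinom_eq_zero_of_lt q (by omega : n < k + 1)]
    ring

theorem one_sub_pow_mul_qbinom_succ (q : R) (n k : ℕ) :
    (1 - q ^ (k + 1)) * qbinom q n (k + 1) = (1 - q ^ (n - k)) * qbinom q n k := by
  induction n generalizing k with
  | zero => simp [qbinom_eq_zero_of_lt]
  | succ n ih =>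
    rcases k with _ | k
    · have h := ih 0
      simp only [qbinom_succ_succ, qbinom_zero_right, Nat.sub_zero] at h ⊢
      linear_combination q * h
    rcases lt_or_ge k n with hk | hk
    · obtain ⟨d, rfl⟩ := Nat.exists_eq_add_of_lt hk
      have h₀ := ih k
      have h₁ := ih (k + 1)
      rw [show k + d + 1 - k = d + 1 by omega] at h₀
      rw [show k + d + 1 - (k + 1) = d by omega] at h₁
      rw [qbinom_succ_succ q (k + d + 1) (k + 1), qbinom_succ_succ q (k + d + 1) k,
        show k + d + 1 + 1 - (k + 1) = d + 1 by omega]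
      linear_combination q ^ (k + 2) * h₁ + h₀
    · rw [qbinom_eq_zero_of_lt q (by omega : n + 1 < k + 1 + 1), Nat.sub_eq_zero_of_le (by omega)]
      ring

theorem sum_pow_mul_qbinom_succ (p s : R) (n : ℕ) :
    ∑ j ∈ range (n + 2), s ^ j * qbinom p (n + 1) j =
      s * ∑ j ∈ range (n + 1), s ^ j * qbinom p n j +
        ∑ j ∈ range (n + 1), (s * p) ^ j * qbinom p n j := by
  have hshift : ∑ j ∈ range (n + 1), (s * p) ^ j * qbinom p n j =
      1 + ∑ j ∈ range (n + 1), (s * p) ^ (j + 1) * qbinom p n (j + 1) := by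
    rw [sum_range_succ' _ n, sum_range_succ _ n, qbinom_eq_zero_of_lt p (Nat.lt_succ_self n),
      qbinom_zero_right]
    ring
  have hpascal : ∀ j, s ^ (j + 1) * qbinom p (n + 1) (j + 1) =
      s * (s ^ j * qbinom p n j) + (s * p) ^ (j + 1) * qbinom p n (j + 1) := fun j => by
    rw [qbinom_succ_succ]
    ring
  rw [hshift, sum_range_succ', qbinom_zero_right, mul_sum]
  simp only [hpascal, sum_add_distrib]
  ring

def oddPowSubProd (q s : R) (j : ℕ) : R :=
  ∏ i ∈ range j, (q ^ (2 * i + 1) - s)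

/-- For `j ≤ n` this is the polynomial `(-q;q)_n / (-q;q)_j`. -/
def negQPochQuot (q : R) (j n : ℕ) : R :=
  ∏ i ∈ Ico j n, (1 + q ^ (i + 1))

def expansionTerm (q s : R) (n j : ℕ) : R :=
  (-1) ^ j * qbinom q n j * oddPowSubProd q s j * negQPochQuot q j n

def expansionSum (q s : R) (n : ℕ) : R :=
  ∑ j ∈ range (n + 1), expansionTerm q s n j

theorem oddPowSubProd_succ (q s : R) (j : ℕ) :
    oddPowSubProd q s (j + 1) = oddPowSubProd q s j * (q ^ (2 * j + 1) - s) :=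
  prod_range_succ _ _

theorem oddPowSubProd_succ_mul_sq (q s : R) (j : ℕ) :
    oddPowSubProd q (s * q ^ 2) (j + 1) = q ^ (2 * j + 1) * (1 - s * q) * oddPowSubProd q s j := by
  induction j with
  | zero => rw [oddPowSubProd, prod_range_one, oddPowSubProd, prod_range_zero]; ring
  | succ j ih => rw [oddPowSubProd_succ, ih, oddPowSubProd_succ]; ring

theorem negQPochQuot_self (q : R) (n : ℕ) : negQPochQuot q n n = 1 := by
  simp [negQPochQuot]

theorem negQPochQuot_succ_right (q : R) {j n : ℕ} (h : j ≤ n) :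
    negQPochQuot q j (n + 1) = negQPochQuot q j n * (1 + q ^ (n + 1)) :=
  prod_Ico_succ_top h _

theorem negQPochQuot_eq_mul_succ_left (q : R) {j n : ℕ} (h : j < n) :
    negQPochQuot q j n = (1 + q ^ (j + 1)) * negQPochQuot q (j + 1) n :=
  prod_eq_prod_Ico_succ_bot h _

theorem expansionTerm_eq_zero_of_lt (q s : R) {n j : ℕ} (h : n < j) :
    expansionTerm q s n j = 0 := by
  simp [expansionTerm, qbinom_eq_zero_of_lt q h]

theorem expansionTerm_zero_right (q s : R) (n : ℕ) :
    expansionTerm q s n 0 = negQPochQuot q 0 n := by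
  simp [expansionTerm, oddPowSubProd, qbinom_zero_right]

theorem expansionTerm_succ (q s : R) {n j : ℕ} (hj : j ≤ n) :
    s * expansionTerm q s n j + expansionTerm q (s * q ^ 2) n (j + 1) =
      q ^ (n + 1 + j) * expansionTerm q s n j -
          q ^ (n + 1 + (j + 1)) * expansionTerm q s n (j + 1) +
        expansionTerm q s (n + 1) (j + 1) := by
  rcases hj.lt_or_eq with hj | rfl
  · obtain ⟨d, rfl⟩ := Nat.exists_eq_add_of_lt hj
    have hratio := one_sub_pow_mul_qbinom_succ q (j + d + 1) j
    rw [show j + d + 1 - j = d + 1 by omega] at hratio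
    simp only [expansionTerm]
    rw [oddPowSubProd_succ_mul_sq, oddPowSubProd_succ, negQPochQuot_eq_mul_succ_left q hj,
      negQPochQuot_succ_right q (by omega : j + 1 ≤ j + d + 1), qbinom_succ_succ q (j + d + 1) j]
    linear_combination ((-1) ^ (j + 1) * q ^ (j + 1) * (s + q ^ j) * oddPowSubProd q s j *
      negQPochQuot q (j + 1) (j + d + 1)) * hratio
  · simp only [expansionTerm, qbinom_succ_succ q j j, qbinom_eq_zero_of_lt q (Nat.lt_succ_self j),
      oddPowSubProd_succ, negQPochQuot_self]
    ring

theorem expansionSum_succ (q s : R) (n : ℕ) :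
    expansionSum q s (n + 1) = s * expansionSum q s n + expansionSum q (s * q ^ 2) n := by
  have hshift : ∀ t, expansionSum q t n =
      negQPochQuot q 0 n + ∑ j ∈ range (n + 1), expansionTerm q t n (j + 1) := fun t => by
    rw [expansionSum, sum_range_succ' _ n, sum_range_succ _ n,
      expansionTerm_eq_zero_of_lt q t (Nat.lt_succ_self n), expansionTerm_zero_right]
    ring
  have hsteps := sum_congr rfl fun j hj =>
    expansionTerm_succ q s (n := n) (mem_range_succ_iff.mp hj)
  rw [sum_add_distrib, sum_add_distrib,
    sum_range_sub' (fun j => q ^ (n + 1 + j) * expansionTerm q s n j),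
    expansionTerm_eq_zero_of_lt q s (Nat.lt_succ_self n), expansionTerm_zero_right,
    ← mul_sum] at hsteps
  rw [hshift (s * q ^ 2), expansionSum, expansionSum, sum_range_succ', expansionTerm_zero_right,
    negQPochQuot_succ_right q (Nat.zero_le n)]
  linear_combination -hsteps

end

theorem stmt13 {R : Type*} [CommRing R] (s q : R) (n : ℕ) :
    ∑ j ∈ Finset.range (n + 1), s ^ j * qbinom (q ^ 2) n j =
      ∑ j ∈ Finset.range (n + 1),
        (-1 : R) ^ j * qbinom q n j * (∏ i ∈ Finset.range j, (q ^ (2 * i + 1) - s)) *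
          ∏ i ∈ Finset.Ico j n, (1 + q ^ (i + 1)) := by
  change _ = expansionSum q s n
  induction n generalizing s with
  | zero => simp [expansionSum, expansionTerm_zero_right, negQPochQuot_self, qbinom_zero_right]
  | succ n ih => rw [sum_pow_mul_qbinom_succ, ih, ih, expansionSum_succ]
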